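/- Let Z1 and Z2 be i.i.d. random vectors in R^d, let γ0 be a d×J1 matrix and δ0 a d×J2 matrix, and let Π0 : R^d → R^m be a function such that for every pair z1, z2 in the support of Z with δ0ᵀz1 = δ0ᵀz2, one has Π0(z1) = Π0(z2) if and only if γ0ᵀz1 = γ0ᵀz2. Define Σ0 = E[(Z1−Z2)(Z1−Z2)ᵀ | Π0(Z1)=Π0(Z2), δ0ᵀZ1=δ0ᵀZ2]. Then Σ0 = E[(Z1−Z2)(Z1−Z2)ᵀ | [γ0,δ0]ᵀ(Z1−Z2)=0] and Σ0 γ0 = 0. -/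

import Mathlib

/-!
Almost surely both `Z1` and `Z2` lie in the support of their common law, so index invertibility
makes the events `{Π0(Z1) = Π0(Z2), δ0ᵀZ1 = δ0ᵀZ2}` and `{[γ0, δ0]ᵀ(Z1 - Z2) = 0}` agree up to a
null set; hence they define the same conditional measure. Under it `γ0ᵀ(Z1 - Z2) = 0` almost
surely, so every row of `Σ0 γ0` is the integral of `(Z1 - Z2)_i · γ0ᵀ(Z1 - Z2) = 0`.
-/

open MeasureTheory ProbabilityTheory Matrix

namespace Matrix

variable {R m n₁ n₂ : Type*} [CommRing R] [Fintype m]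

lemma transpose_fromCols_mulVec_eq_zero_iff (A : Matrix m n₁ R) (B : Matrix m n₂ R)
    (v : m → R) : (fromCols A B)ᵀ *ᵥ v = 0 ↔ Aᵀ *ᵥ v = 0 ∧ Bᵀ *ᵥ v = 0 := by
  simp only [mulVec_transpose, vecMul_fromCols, ← Sum.elim_zero_zero, Sum.elim_eq_iff]

lemma transpose_fromCols_mulVec_sub_eq_zero_iff (A : Matrix m n₁ R) (B : Matrix m n₂ R)
    (v w : m → R) :
    (fromCols A B)ᵀ *ᵥ (v - w) = 0 ↔ Aᵀ *ᵥ v = Aᵀ *ᵥ w ∧ Bᵀ *ᵥ v = Bᵀ *ᵥ w := by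
  rw [transpose_fromCols_mulVec_eq_zero_iff, mulVec_sub, mulVec_sub, sub_eq_zero, sub_eq_zero]

end Matrix

namespace ProbabilityTheory

variable {Ω : Type*} [MeasurableSpace Ω]

lemma cond_congr_ae {μ : Measure Ω} {s t : Set Ω} (h : s =ᵐ[μ] t) : μ[|s] = μ[|t] := by
  simp only [cond, measure_congr h, Measure.restrict_congr_set h]

noncomputable def secondMoment {ι : Type*} (ν : Measure Ω) (X : Ω → ι → ℝ) : Matrix ι ι ℝ :=
  Matrix.of fun i j => ∫ ω, X ω i * X ω j ∂ν

lemma secondMoment_mul_eq_zero {ι κ : Type*} [Fintype ι] {ν : Measure Ω} {X : Ω → ι → ℝ}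
    {A : Matrix ι κ ℝ} (hint : ∀ i j, Integrable (fun ω => X ω i * X ω j) ν)
    (hX : ∀ᵐ ω ∂ν, X ω ᵥ* A = 0) : secondMoment ν X * A = 0 := by
  ext i j
  calc (secondMoment ν X * A) i j = ∑ k, ∫ ω, X ω i * X ω k * A k j ∂ν := by
        simp only [secondMoment, mul_apply, of_apply, integral_mul_const]
    _ = ∫ ω, X ω i * (X ω ᵥ* A) j ∂ν := by
        rw [← integral_finsetSum _ fun k _ => (hint i k).mul_const _]
        simp only [vecMul, dotProduct, Finset.mul_sum, mul_assoc]
    _ = 0 := integral_eq_zero_of_ae <| by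
        filter_upwards [hX] with ω hω
        simp [hω]

end ProbabilityTheory

theorem stmt_0_general {Ω : Type*} [MeasurableSpace Ω] (μ : Measure Ω)
    {d J1 J2 m : ℕ}
    (Z1 Z2 : Ω → Fin d → ℝ) (hZ1 : Measurable Z1) (hZ2 : Measurable Z2)
    (hid : μ.map Z1 = μ.map Z2)
    (γ0 : Matrix (Fin d) (Fin J1) ℝ) (δ0 : Matrix (Fin d) (Fin J2) ℝ)
    (Pi0 : (Fin d → ℝ) → (Fin m → ℝ))
    -- index invertibility on the support of the (common) distribution of Z
    (hinv : ∀ z1 z2 : Fin d → ℝ,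
      (∀ U ∈ nhds z1, 0 < μ.map Z1 U) → (∀ U ∈ nhds z2, 0 < μ.map Z1 U) →
      δ0ᵀ.mulVec z1 = δ0ᵀ.mulVec z2 →
      (Pi0 z1 = Pi0 z2 ↔ γ0ᵀ.mulVec z1 = γ0ᵀ.mulVec z2))
    (s t : Set Ω)
    (hs : s = {ω | Pi0 (Z1 ω) = Pi0 (Z2 ω) ∧ δ0ᵀ.mulVec (Z1 ω) = δ0ᵀ.mulVec (Z2 ω)})
    (ht : t = {ω | (Matrix.fromCols γ0 δ0)ᵀ.mulVec (Z1 ω - Z2 ω) = 0})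
    (Sigma0 : Matrix (Fin d) (Fin d) ℝ)
    (hSigma0 : ∀ i j, Sigma0 i j = ∫ ω, (Z1 ω i - Z2 ω i) * (Z1 ω j - Z2 ω j) ∂(μ[|s]))
    (hint : ∀ i j, Integrable (fun ω => (Z1 ω i - Z2 ω i) * (Z1 ω j - Z2 ω j)) (μ[|s])) :
    (∀ i j, Sigma0 i j = ∫ ω, (Z1 ω i - Z2 ω i) * (Z1 ω j - Z2 ω j) ∂(μ[|t])) ∧
      Sigma0 * γ0 = 0 := by
  have hsupp1 : ∀ᵐ ω ∂μ, Z1 ω ∈ (μ.map Z1).support :=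
    ae_of_ae_map hZ1.aemeasurable Measure.support_mem_ae
  have hsupp2 : ∀ᵐ ω ∂μ, Z2 ω ∈ (μ.map Z1).support :=
    ae_of_ae_map hZ2.aemeasurable (hid ▸ Measure.support_mem_ae)
  have hst : s =ᵐ[μ] t := by
    filter_upwards [hsupp1, hsupp2] with ω h1 h2
    rw [Measure.mem_support_iff_forall] at h1 h2
    simp only [hs, ht, eq_iff_iff, transpose_fromCols_mulVec_sub_eq_zero_iff]
    exact ⟨fun ⟨hP, hδ⟩ => ⟨(hinv _ _ h1 h2 hδ).1 hP, hδ⟩,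
      fun ⟨hγ, hδ⟩ => ⟨(hinv _ _ h1 h2 hδ).2 hγ, hδ⟩⟩
  have hcond := cond_congr_ae hst
  have hSigma : Sigma0 = secondMoment (μ[|t]) (Z1 - Z2) := by
    ext i j
    simp [hSigma0, hcond, secondMoment]
  have ht_meas : MeasurableSet t := ht ▸ measurableSet_eq_fun (by fun_prop) measurable_const
  refine ⟨fun i j => by rw [hSigma0, hcond], hSigma ▸ secondMoment_mul_eq_zero ?_ ?_⟩
  · simpa [← hcond] using hint
  · filter_upwards [ae_cond_mem ht_meas] with ω hω
    rw [ht, Set.mem_ofPred_eq, transpose_fromCols_mulVec_eq_zero_iff] at hω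
    simpa [mulVec_transpose] using hω.1

/-- Index invertibility implies the two characterizations of the constraint
matrix `Sigma0` and the equality constraint `Sigma0 * γ0 = 0`. -/
theorem stmt_0 {Ω : Type*} [MeasurableSpace Ω] (μ : Measure Ω) [IsProbabilityMeasure μ]
    {d J1 J2 m : ℕ}
    (Z1 Z2 : Ω → Fin d → ℝ) (hZ1 : Measurable Z1) (hZ2 : Measurable Z2)
    (hindep : IndepFun Z1 Z2 μ) (hid : μ.map Z1 = μ.map Z2)
    (γ0 : Matrix (Fin d) (Fin J1) ℝ) (δ0 : Matrix (Fin d) (Fin J2) ℝ)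
    (Pi0 : (Fin d → ℝ) → (Fin m → ℝ))
    -- index invertibility on the support of the (common) distribution of Z
    (hinv : ∀ z1 z2 : Fin d → ℝ,
      (∀ U ∈ nhds z1, 0 < μ.map Z1 U) → (∀ U ∈ nhds z2, 0 < μ.map Z1 U) →
      δ0ᵀ.mulVec z1 = δ0ᵀ.mulVec z2 →
      (Pi0 z1 = Pi0 z2 ↔ γ0ᵀ.mulVec z1 = γ0ᵀ.mulVec z2))
    (s t : Set Ω)
    (hs : s = {ω | Pi0 (Z1 ω) = Pi0 (Z2 ω) ∧ δ0ᵀ.mulVec (Z1 ω) = δ0ᵀ.mulVec (Z2 ω)})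
    (ht : t = {ω | (Matrix.fromCols γ0 δ0)ᵀ.mulVec (Z1 ω - Z2 ω) = 0})
    (hspos : μ s ≠ 0)
    (Sigma0 : Matrix (Fin d) (Fin d) ℝ)
    (hSigma0 : ∀ i j, Sigma0 i j = ∫ ω, (Z1 ω i - Z2 ω i) * (Z1 ω j - Z2 ω j) ∂(μ[|s]))
    (hint : ∀ i j, Integrable (fun ω => (Z1 ω i - Z2 ω i) * (Z1 ω j - Z2 ω j)) (μ[|s])) :
    (∀ i j, Sigma0 i j = ∫ ω, (Z1 ω i - Z2 ω i) * (Z1 ω j - Z2 ω j) ∂(μ[|t])) ∧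
      Sigma0 * γ0 = 0 :=
  stmt_0_general μ Z1 Z2 hZ1 hZ2 hid γ0 δ0 Pi0 hinv s t hs ht Sigma0 hSigma0 hint
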